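/- Define Γ(t,s) = (1/224)·{ −7·[ (3t − s·t + 3s)·log(2s² − 3s + 9) + 2·(s+3)·(t+3)·log(s+3) − 8·s·t·log t + 2·(2s+3)·(2t+3)·log(2t+3) ] − 6√7·(s·t + s + t − 6)·arctan((3 − 4s)/(3√7)) }, where log is the natural logarithm of the absolute value. Then for all (t,s) with s < −3 and −3/2 < t < 0: (i) ∂²Γ/∂s² = −s·(s−t)/(4·(s+3)·((2/3)s² − s + 3)); (ii) ∂²Γ/∂t² = (s−t)/(4·((2/3)t² + t)); (iii) ∂Γ/∂s − ∂Γ/∂t + (s−t)·∂²Γ/∂s∂t = 0. -/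

import Mathlib

/-!
All partial derivatives are computed in closed form. The arctangent term
`√7 · arctan ((3 - 4s) / (3√7))` has derivative `-21 / (2 (2s² - 3s + 9))`, because
`63 + (3 - 4s)² = 8 (2s² - 3s + 9)`. With this, the rational parts of `∂Γ/∂s`, `∂Γ/∂t` and
`∂²Γ/∂s∂t` collapse to constants, leaving combinations of `log (2s² - 3s + 9)`, `log (s + 3)`,
`log t`, `log (2t + 3)` and the arctangent term with coefficients affine in `s` and `t`.
For these, relation (iii) is a polynomial identity.
-/

/-- The symplectic potential `Γ(t,s)` of the Ricci-flat orthotoric metric on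
`tot K_{WP[112]}` in the orthotoric coordinates `(t,s)`.
`Real.log` is the natural logarithm of the absolute value. -/
noncomputable def Gam (t s : ℝ) : ℝ :=
  (1 / 224) *
    (-7 * ((3 * t - s * t + 3 * s) * Real.log (2 * s ^ 2 - 3 * s + 9)
        + 2 * (s + 3) * (t + 3) * Real.log (s + 3)
        - 8 * s * t * Real.log t
        + 2 * (2 * s + 3) * (2 * t + 3) * Real.log (2 * t + 3))
      - 6 * Real.sqrt 7 * (s * t + s + t - 6) *
          Real.arctan ((3 - 4 * s) / (3 * Real.sqrt 7)))

open Real Filter Topology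

theorem deriv_deriv_eq_of_eventually_hasDerivAt {𝕜 F : Type*} [NontriviallyNormedField 𝕜]
    [NormedAddCommGroup F] [NormedSpace 𝕜 F] {f f' : 𝕜 → F} {a : 𝕜} {f'' : F}
    (hf : ∀ᶠ x in 𝓝 a, HasDerivAt f (f' x) x) (hf' : HasDerivAt f' f'' a) :
    deriv (deriv f) a = f'' :=
  EventuallyEq.deriv_eq (hf.mono fun _ hx => hx.deriv) |>.trans hf'.deriv

namespace Gam

theorem quadratic_pos (s : ℝ) : 0 < 2 * s ^ 2 - 3 * s + 9 := by
  nlinarith [sq_nonneg (4 * s - 3)]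

theorem hasDerivAt_quadratic (s : ℝ) :
    HasDerivAt (fun x => 2 * x ^ 2 - 3 * x + 9) (4 * s - 3) s := by
  have h := (((hasDerivAt_pow 2 s).const_mul 2).sub ((hasDerivAt_id' s).const_mul 3)).add_const 9
  exact h.congr_deriv (by norm_num; ring)

noncomputable def arctanTerm (s : ℝ) : ℝ := √7 * arctan ((3 - 4 * s) / (3 * √7))

theorem hasDerivAt_arctanTerm (s : ℝ) :
    HasDerivAt arctanTerm (-(21 / 2) / (2 * s ^ 2 - 3 * s + 9)) s := by
  have h := ((((hasDerivAt_id' s).const_mul 4).const_sub 3).div_const (3 * √7)).arctan.const_mul √7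
  refine h.congr_deriv ?_
  have h7 : √7 ^ 2 = 7 := sq_sqrt (by norm_num)
  have one_add_sq : 1 + ((3 - 4 * s) / (3 * √7)) ^ 2 = 8 * (2 * s ^ 2 - 3 * s + 9) / 63 := by
    rw [div_pow, mul_pow, h7]
    ring
  have hQ := (quadratic_pos s).ne'
  rw [one_add_sq]
  field_simp
  ring

noncomputable def partialS (t s : ℝ) : ℝ :=
  (1 / 224) *
    (-7 * ((3 - t) * log (2 * s ^ 2 - 3 * s + 9) + 2 * (t + 3) * log (s + 3)
        - 8 * t * log t + 4 * (2 * t + 3) * log (2 * t + 3))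
      - 6 * (t + 1) * arctanTerm s - 84)

noncomputable def partialT (t s : ℝ) : ℝ :=
  (1 / 224) *
    (-7 * ((3 - s) * log (2 * s ^ 2 - 3 * s + 9) + 2 * (s + 3) * log (s + 3)
        - 8 * s * log t + 4 * (2 * s + 3) * log (2 * t + 3))
      - 6 * (s + 1) * arctanTerm s - 84)

noncomputable def partialTS (t s : ℝ) : ℝ :=
  (1 / 224) *
    (-7 * (-log (2 * s ^ 2 - 3 * s + 9) + 2 * log (s + 3) - 8 * log t + 8 * log (2 * t + 3))
      - 6 * arctanTerm s)

theorem hasDerivAt_s {s : ℝ} (t : ℝ) (hs : s ≠ -3) : HasDerivAt (Gam t) (partialS t s) s := by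
  have hs3 : s + 3 ≠ 0 := by contrapose! hs; linarith
  have hQ := (quadratic_pos s).ne'
  have h1 := (((hasDerivAt_id' s).const_mul (3 - t)).add_const (3 * t)).mul
    ((hasDerivAt_quadratic s).log hQ)
  have h2 := (((hasDerivAt_id' s).add_const 3).const_mul (2 * (t + 3))).mul
    (((hasDerivAt_id' s).add_const 3).log hs3)
  have h3 := (hasDerivAt_id' s).mul_const (8 * t * log t)
  have h4 := (((hasDerivAt_id' s).const_mul 2).add_const 3).mul_const
    (2 * (2 * t + 3) * log (2 * t + 3))
  have h5 := (((hasDerivAt_id' s).mul_const (t + 1)).add_const (t - 6)).mul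
    (hasDerivAt_arctanTerm s)
  have H := (((((h1.add h2).sub h3).add h4).const_mul (-7)).sub (h5.const_mul 6)).const_mul
    (1 / 224)
  refine (H.congr_of_eventuallyEq (.of_forall fun x => ?_)).congr_deriv ?_
  · simp only [Gam, arctanTerm, Pi.add_apply, Pi.sub_apply, Pi.mul_apply]
    ring
  · simp only [partialS]
    linear_combination (t - 3) / 16 * mul_inv_cancel₀ hQ - (t + 3) / 16 * mul_inv_cancel₀ hs3

theorem hasDerivAt_t {t : ℝ} (s : ℝ) (ht : t ≠ 0) (ht' : t ≠ -3 / 2) :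
    HasDerivAt (fun t => Gam t s) (partialT t s) t := by
  have ht3 : 2 * t + 3 ≠ 0 := by contrapose! ht'; linarith
  have h1 := (((hasDerivAt_id' t).const_mul (3 - s)).add_const (3 * s)).mul_const
    (log (2 * s ^ 2 - 3 * s + 9))
  have h2 := (((hasDerivAt_id' t).const_mul (2 * (s + 3))).add_const (6 * (s + 3))).mul_const
    (log (s + 3))
  have h3 := (hasDerivAt_mul_log ht).const_mul (8 * s)
  have h4 := ((((hasDerivAt_id' t).const_mul 2).add_const 3).mul
    ((((hasDerivAt_id' t).const_mul 2).add_const 3).log ht3)).const_mul (2 * (2 * s + 3))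
  have h5 := (((hasDerivAt_id' t).mul_const (s + 1)).add_const (s - 6)).mul_const (arctanTerm s)
  have H := (((((h1.add h2).sub h3).add h4).const_mul (-7)).sub (h5.const_mul 6)).const_mul
    (1 / 224)
  refine (H.congr_of_eventuallyEq (.of_forall fun x => ?_)).congr_deriv ?_
  · simp only [Gam, arctanTerm, Pi.add_apply, Pi.sub_apply, Pi.mul_apply]
    ring
  · simp only [partialT]
    linear_combination -(2 * s + 3) / 8 * mul_inv_cancel₀ ht3

theorem hasDerivAt_partialS_s {s : ℝ} (t : ℝ) (hs : s ≠ -3) :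
    HasDerivAt (partialS t) (-s * (s - t) / (4 * (s + 3) * ((2 / 3) * s ^ 2 - s + 3))) s := by
  have hs3 : s + 3 ≠ 0 := by contrapose! hs; linarith
  have hQ := (quadratic_pos s).ne'
  have h1 := ((hasDerivAt_quadratic s).log hQ).const_mul (3 - t)
  have h2 := (((hasDerivAt_id' s).add_const 3).log hs3).const_mul (2 * (t + 3))
  have H := ((((((h1.add h2).sub_const (8 * t * log t)).add_const
    (4 * (2 * t + 3) * log (2 * t + 3))).const_mul (-7)).sub
    ((hasDerivAt_arctanTerm s).const_mul (6 * (t + 1)))).sub_const 84).const_mul (1 / 224)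
  refine H.congr_deriv ?_
  rw [show (2 / 3) * s ^ 2 - s + 3 = (2 * s ^ 2 - 3 * s + 9) / 3 by ring]
  -- `field_simp` rewrites the quadratic into a normal form in which it no longer sees `hQ`.
  generalize hQdef : 2 * s ^ 2 - 3 * s + 9 = Q at hQ ⊢
  field_simp
  subst hQdef
  ring

theorem hasDerivAt_partialT_s {s : ℝ} (t : ℝ) (hs : s ≠ -3) :
    HasDerivAt (partialT t) (partialTS t s) s := by
  have hs3 : s + 3 ≠ 0 := by contrapose! hs; linarith
  have hQ := (quadratic_pos s).ne'
  have h1 := (((hasDerivAt_id' s).const_sub 3).mul ((hasDerivAt_quadratic s).log hQ))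
  have h2 := (((hasDerivAt_id' s).add_const 3).const_mul 2).mul
    (((hasDerivAt_id' s).add_const 3).log hs3)
  have h3 := (hasDerivAt_id' s).mul_const (8 * log t)
  have h4 := (((hasDerivAt_id' s).const_mul 2).add_const 3).mul_const (4 * log (2 * t + 3))
  have h5 := ((hasDerivAt_id' s).add_const 1).mul (hasDerivAt_arctanTerm s)
  have H := ((((((h1.add h2).sub h3).add h4).const_mul (-7)).sub (h5.const_mul 6)).sub_const
    84).const_mul (1 / 224)
  refine (H.congr_of_eventuallyEq (.of_forall fun x => ?_)).congr_deriv ?_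
  · simp only [partialT, Pi.add_apply, Pi.sub_apply, Pi.mul_apply]
    ring
  · simp only [partialTS]
    linear_combination (1 / 16) * mul_inv_cancel₀ hQ - (1 / 16) * mul_inv_cancel₀ hs3

theorem hasDerivAt_partialT_t {t : ℝ} (s : ℝ) (ht : t ≠ 0) (ht' : t ≠ -3 / 2) :
    HasDerivAt (fun t => partialT t s) ((s - t) / (4 * ((2 / 3) * t ^ 2 + t))) t := by
  have ht3 : 2 * t + 3 ≠ 0 := by contrapose! ht'; linarith
  have h1 := (hasDerivAt_log ht).const_mul (8 * s)
  have h2 := (((hasDerivAt_id' t).const_mul 2).add_const 3).log ht3 |>.const_mul (4 * (2 * s + 3))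
  have H := ((((((h1.const_sub ((3 - s) * log (2 * s ^ 2 - 3 * s + 9)
    + 2 * (s + 3) * log (s + 3))).add h2).const_mul (-7)).sub_const
    (6 * (s + 1) * arctanTerm s)).sub_const 84).const_mul (1 / 224))
  refine H.congr_deriv ?_
  rw [show (2 / 3) * t ^ 2 + t = t * (2 * t + 3) / 3 by ring]
  generalize hu : 2 * t + 3 = u at ht3 ⊢
  field_simp
  subst hu
  ring

theorem partialS_sub_partialT_add_mul_partialTS (t s : ℝ) :
    partialS t s - partialT t s + (s - t) * partialTS t s = 0 := by
  unfold partialS partialT partialTS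
  ring

end Gam

/-- For all `(t,s)` with `s < −3`, `−3/2 < t < 0`:
(i)   `∂²Γ/∂s² = −s(s−t)/(4(s+3)((2/3)s² − s + 3))`;
(ii)  `∂²Γ/∂t² = (s−t)/(4((2/3)t² + t))`;
(iii) `∂Γ/∂s − ∂Γ/∂t + (s−t)·∂²Γ/∂s∂t = 0`. -/
theorem stmt_11 (t s : ℝ) (hs : s < -3) (ht₁ : -3 / 2 < t) (ht₂ : t < 0) :
    deriv (fun s' => deriv (fun s'' => Gam t s'') s') s =
      -s * (s - t) / (4 * (s + 3) * ((2 / 3) * s ^ 2 - s + 3)) ∧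
    deriv (fun t' => deriv (fun t'' => Gam t'' s) t') t =
      (s - t) / (4 * ((2 / 3) * t ^ 2 + t)) ∧
    deriv (fun s' => Gam t s') s - deriv (fun t' => Gam t' s) t
      + (s - t) * deriv (fun s' => deriv (fun t' => Gam t' s') t) s = 0 := by
  have hs3 : s ≠ -3 := hs.ne
  have ht0 : t ≠ 0 := ht₂.ne
  have ht3 : t ≠ -3 / 2 := ht₁.ne'
  have hGam_t (s' : ℝ) := Gam.hasDerivAt_t s' ht0 ht3
  refine ⟨?_, ?_, ?_⟩
  · exact deriv_deriv_eq_of_eventually_hasDerivAt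
      ((eventually_ne_nhds hs3).mono fun _ hx => Gam.hasDerivAt_s t hx)
      (Gam.hasDerivAt_partialS_s t hs3)
  · exact deriv_deriv_eq_of_eventually_hasDerivAt
      (((eventually_ne_nhds ht0).and (eventually_ne_nhds ht3)).mono fun _ hx =>
        Gam.hasDerivAt_t s hx.1 hx.2)
      (Gam.hasDerivAt_partialT_t s ht0 ht3)
  · rw [(Gam.hasDerivAt_s t hs3).deriv, (hGam_t s).deriv, funext fun s' => (hGam_t s').deriv,
      (Gam.hasDerivAt_partialT_s t hs3).deriv]
    exact Gam.partialS_sub_partialT_add_mul_partialTS t s
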